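/- Let C1 = (V1,E1) and C2 = (V2,E2) be finite simple graphs in which every vertex is incident to at least one edge, with V1 ∩ V2 = {u,v}, E1 ∩ E2 = {uv}, and |V1|, |V2| ≥ 3. If the graph C with vertex set V1 ∪ V2 and edge set (E1 ∪ E2) \ {uv} is a rigidity circuit, then both C1 and C2 are rigidity circuits (any 2-split of a rigidity circuit is a pair of rigidity circuits). -/
import Mathlib


/-- The two endpoints of an edge (an element of `Sym2 ℕ`), as a `Finset`. -/
def epts (e : Sym2 ℕ) : Finset ℕ :=
  Sym2.lift ⟨fun a b => ({a, b} : Finset ℕ), fun a b => Finset.pair_comm a b⟩ e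

/-- The vertex span of a set of edges: every vertex incident to at least one edge. -/
def verts (E : Finset (Sym2 ℕ)) : Finset ℕ := E.biUnion epts

/-- The edges of `E` spanned by a vertex subset `V`. -/
def spannedEdges (E : Finset (Sym2 ℕ)) (V : Finset ℕ) : Finset (Sym2 ℕ) :=
  E.filter fun e => epts e ⊆ V

/-- A rigidity circuit: a finite simple graph (edge set of non-loop edges, with vertex
set the set of vertices incident to at least one edge) with `|E| = 2|V| - 2` edges and
such that every proper vertex subset `V'` with `|V'| ≥ 2` spans at most `2|V'| - 3` edges. -/
def IsCircuit (E : Finset (Sym2 ℕ)) : Prop :=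
  (∀ e ∈ E, ¬ e.IsDiag) ∧
  E.card = 2 * (verts E).card - 2 ∧
  ∀ V' : Finset ℕ, V' ⊂ verts E → 2 ≤ V'.card →
    (spannedEdges E V').card ≤ 2 * V'.card - 3

/-- A `(2,3)`-sparse and tight (Laman) graph on the vertex set `V` with edge set `E`. -/
def IsLaman (V : Finset ℕ) (E : Finset (Sym2 ℕ)) : Prop :=
  (∀ e ∈ E, ¬ e.IsDiag) ∧ verts E ⊆ V ∧
  E.card = 2 * V.card - 3 ∧
  ∀ V' : Finset ℕ, V' ⊆ V → 2 ≤ V'.card →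
    (spannedEdges E V').card ≤ 2 * V'.card - 3

lemma epts_mk (a b : ℕ) : epts s(a, b) = {a, b} := rfl

lemma epts_subset_verts {E : Finset (Sym2 ℕ)} {e : Sym2 ℕ} (h : e ∈ E) :
    epts e ⊆ verts E := Finset.subset_biUnion_of_mem epts h

lemma sym2_eq_of_subset_pair {u v : ℕ} (e : Sym2 ℕ) (hd : ¬ e.IsDiag)
    (h : epts e ⊆ ({u, v} : Finset ℕ)) : e = s(u, v) := by
  induction e using Sym2.ind with
  | _ a b =>
    simp only [Sym2.isDiag_iff_proj_eq] at hd
    have ha : a ∈ ({u,v} : Finset ℕ) := h (by simp [epts_mk])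
    have hb : b ∈ ({u,v} : Finset ℕ) := h (by simp [epts_mk])
    simp only [Finset.mem_insert, Finset.mem_singleton] at ha hb
    rcases ha with rfl|rfl <;> rcases hb with rfl|rfl <;> simp_all [Sym2.eq_swap]

/-- Edges of the merged circuit spanned by `verts E1` are exactly `E1` minus `uv`. -/
lemma spanned_eq_erase (E1 E2 : Finset (Sym2 ℕ)) (u v : ℕ)
    (hE2 : ∀ e ∈ E2, ¬ e.IsDiag)
    (hV : verts E1 ∩ verts E2 = {u, v}) :
    spannedEdges ((E1 ∪ E2).erase s(u, v)) (verts E1) = E1.erase s(u, v) := by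
  ext e
  simp only [spannedEdges, Finset.mem_filter, Finset.mem_erase, Finset.mem_union]
  constructor
  · rintro ⟨⟨hne, he⟩, hsub⟩
    refine ⟨hne, ?_⟩
    rcases he with h1 | h2
    · exact h1
    · exfalso; apply hne
      have hs : epts e ⊆ verts E1 ∩ verts E2 :=
        Finset.subset_inter hsub (epts_subset_verts h2)
      rw [hV] at hs
      exact sym2_eq_of_subset_pair e (hE2 e h2) hs
  · rintro ⟨hne, h1⟩
    exact ⟨⟨hne, Or.inl h1⟩, epts_subset_verts h1⟩

lemma aux_circuit (E1 E2 : Finset (Sym2 ℕ)) (u v : ℕ) (huv : u ≠ v)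
    (hE1 : ∀ e ∈ E1, ¬ e.IsDiag) (hE2 : ∀ e ∈ E2, ¬ e.IsDiag)
    (hV : verts E1 ∩ verts E2 = {u, v})
    (hE : E1 ∩ E2 = {s(u, v)})
    (hn1 : 3 ≤ (verts E1).card) (hn2 : 3 ≤ (verts E2).card)
    (hverts : verts ((E1 ∪ E2).erase s(u, v)) = verts E1 ∪ verts E2)
    (hC : IsCircuit ((E1 ∪ E2).erase s(u, v))) : IsCircuit E1 := by
  set Ec := (E1 ∪ E2).erase s(u, v) with hEc
  have huvE : s(u, v) ∈ E1 ∩ E2 := by rw [hE]; exact Finset.mem_singleton_self _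
  have huv1 : s(u, v) ∈ E1 := (Finset.mem_inter.1 huvE).1
  have huv2 : s(u, v) ∈ E2 := (Finset.mem_inter.1 huvE).2
  have hu1 : u ∈ verts E1 := epts_subset_verts huv1 (by simp [epts_mk])
  have hv1 : v ∈ verts E1 := epts_subset_verts huv1 (by simp [epts_mk])
  have hu2 : u ∈ verts E2 := epts_subset_verts huv2 (by simp [epts_mk])
  have hv2 : v ∈ verts E2 := epts_subset_verts huv2 (by simp [epts_mk])
  -- proper containments of V1 and V2 in verts Ec
  have hV1sub : verts E1 ⊆ verts Ec := hverts ▸ Finset.subset_union_left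
  have hV2sub : verts E2 ⊆ verts Ec := hverts ▸ Finset.subset_union_right
  have hV1proper : verts E1 ⊂ verts Ec := by
    refine ⟨hV1sub, fun hcon => ?_⟩
    have h2sub : verts E2 ⊆ verts E1 := hV2sub.trans hcon
    have : verts E2 ⊆ ({u, v} : Finset ℕ) := by
      rw [← hV]; exact Finset.subset_inter h2sub Finset.Subset.rfl
    have := Finset.card_le_card this
    rw [Finset.card_pair huv] at this; omega
  have hV2proper : verts E2 ⊂ verts Ec := by
    refine ⟨hV2sub, fun hcon => ?_⟩
    have h1sub : verts E1 ⊆ verts E2 := hV1sub.trans hcon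
    have : verts E1 ⊆ ({u, v} : Finset ℕ) := by
      rw [← hV]; exact Finset.subset_inter Finset.Subset.rfl h1sub
    have := Finset.card_le_card this
    rw [Finset.card_pair huv] at this; omega
  -- cardinality bookkeeping
  have hcardE1pos : 1 ≤ E1.card := Finset.card_pos.2 ⟨_, huv1⟩
  have hcardE2pos : 1 ≤ E2.card := Finset.card_pos.2 ⟨_, huv2⟩
  have hEuni : (E1 ∪ E2).card + 1 = E1.card + E2.card := by
    have := Finset.card_union_add_card_inter E1 E2
    rw [hE, Finset.card_singleton] at this; exact this
  have hEcCard : Ec.card = (E1 ∪ E2).card - 1 :=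
    Finset.card_erase_of_mem (Finset.mem_union_left _ huv1)
  have hVuni : (verts E1 ∪ verts E2).card + 2 = (verts E1).card + (verts E2).card := by
    have := Finset.card_union_add_card_inter (verts E1) (verts E2)
    rw [hV, Finset.card_pair huv] at this; exact this
  have hVcCard : (verts Ec).card = (verts E1 ∪ verts E2).card := by rw [hverts]
  have hCcard := hC.2.1
  -- spanned edges of V1 and V2
  have hs1 : (spannedEdges Ec (verts E1)).card = E1.card - 1 := by
    rw [hEc, spanned_eq_erase E1 E2 u v hE2 hV, Finset.card_erase_of_mem huv1]
  have hs2 : (spannedEdges Ec (verts E2)).card = E2.card - 1 := by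
    have h := spanned_eq_erase E2 E1 u v hE1 (by rw [Finset.inter_comm]; exact hV)
    rw [Finset.union_comm] at h
    rw [hEc, h, Finset.card_erase_of_mem huv2]
  have hb1 := hC.2.2 (verts E1) hV1proper (by omega)
  have hb2 := hC.2.2 (verts E2) hV2proper (by omega)
  rw [hs1] at hb1
  rw [hs2] at hb2
  have hE1card : E1.card = 2 * (verts E1).card - 2 := by omega
  have hE2card : E2.card = 2 * (verts E2).card - 2 := by omega
  refine ⟨hE1, hE1card, ?_⟩
  -- sparsity
  intro V' hV' hV'2
  by_cases hcase : u ∈ V' ∧ v ∈ V'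
  · -- hard case: use W = V' ∪ verts E2
    set W := V' ∪ verts E2 with hW
    obtain ⟨x, hx1, hxV'⟩ := Finset.exists_of_ssubset hV'
    have hxW : x ∉ W := by
      rw [hW]
      simp only [Finset.mem_union, not_or]
      refine ⟨hxV', fun hx2 => ?_⟩
      have : x ∈ ({u, v} : Finset ℕ) := by rw [← hV]; exact Finset.mem_inter.2 ⟨hx1, hx2⟩
      simp only [Finset.mem_insert, Finset.mem_singleton] at this
      rcases this with rfl | rfl
      · exact hxV' hcase.1
      · exact hxV' hcase.2
    have hWproper : W ⊂ verts Ec := by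
      refine ⟨Finset.union_subset (hV'.1.trans hV1sub) hV2sub, fun hcon => ?_⟩
      exact hxW (hcon (hV1sub hx1))
    have hWinter : V' ∩ verts E2 = {u, v} := by
      apply Finset.Subset.antisymm
      · refine (Finset.inter_subset_inter hV'.1 Finset.Subset.rfl).trans ?_
        rw [hV]
      · intro y hy
        simp only [Finset.mem_insert, Finset.mem_singleton] at hy
        rcases hy with rfl | rfl
        · exact Finset.mem_inter.2 ⟨hcase.1, hu2⟩
        · exact Finset.mem_inter.2 ⟨hcase.2, hv2⟩
    have hWcard : W.card + 2 = V'.card + (verts E2).card := by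
      have := Finset.card_union_add_card_inter V' (verts E2)
      rw [hWinter, Finset.card_pair huv] at this; exact this
    -- the two disjoint edge families inside spannedEdges Ec W
    set A := (spannedEdges E1 V').erase s(u, v) with hA
    set B := E2.erase s(u, v) with hB
    have hAsub : A ⊆ spannedEdges Ec W := by
      intro e he
      rw [hA, Finset.mem_erase] at he
      obtain ⟨hne, he1⟩ := he
      rw [spannedEdges, Finset.mem_filter] at he1 ⊢
      exact ⟨Finset.mem_erase.2 ⟨hne, Finset.mem_union_left _ he1.1⟩,
        he1.2.trans Finset.subset_union_left⟩
    have hBsub : B ⊆ spannedEdges Ec W := by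
      intro e he
      rw [hB, Finset.mem_erase] at he
      obtain ⟨hne, he2⟩ := he
      rw [spannedEdges, Finset.mem_filter]
      exact ⟨Finset.mem_erase.2 ⟨hne, Finset.mem_union_right _ he2⟩,
        (epts_subset_verts he2).trans Finset.subset_union_right⟩
    have hdisj : Disjoint A B := by
      rw [Finset.disjoint_left]
      intro e heA heB
      rw [hA, Finset.mem_erase] at heA
      rw [hB, Finset.mem_erase] at heB
      have : e ∈ E1 ∩ E2 :=
        Finset.mem_inter.2 ⟨(Finset.mem_filter.1 heA.2).1, heB.2⟩
      rw [hE, Finset.mem_singleton] at this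
      exact heA.1 this
    have huvSp : s(u, v) ∈ spannedEdges E1 V' := by
      rw [spannedEdges, Finset.mem_filter]
      refine ⟨huv1, ?_⟩
      rw [epts_mk]
      exact Finset.insert_subset hcase.1 (Finset.singleton_subset_iff.2 hcase.2)
    have hAcard : A.card = (spannedEdges E1 V').card - 1 :=
      Finset.card_erase_of_mem huvSp
    have hSp1 : 1 ≤ (spannedEdges E1 V').card := Finset.card_pos.2 ⟨_, huvSp⟩
    have hBcard : B.card = E2.card - 1 := Finset.card_erase_of_mem huv2
    have hABcard : (A ∪ B).card = A.card + B.card := Finset.card_union_of_disjoint hdisj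
    have hle : (A ∪ B).card ≤ (spannedEdges Ec W).card :=
      Finset.card_le_card (Finset.union_subset hAsub hBsub)
    have hWbound := hC.2.2 W hWproper (by omega)
    omega
  · -- easy case: spannedEdges E1 V' ⊆ spannedEdges Ec V'
    have hsub : spannedEdges E1 V' ⊆ spannedEdges Ec V' := by
      intro e he
      rw [spannedEdges, Finset.mem_filter] at he ⊢
      refine ⟨Finset.mem_erase.2 ⟨fun hcon => ?_, Finset.mem_union_left _ he.1⟩, he.2⟩
      subst hcon
      rw [epts_mk] at he
      exact hcase ⟨he.2 (by simp), he.2 (by simp)⟩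
    have hproper : V' ⊂ verts Ec := hV'.trans hV1proper
    have := hC.2.2 V' hproper hV'2
    exact le_trans (Finset.card_le_card hsub) this

/-- Any 2-split of a rigidity circuit is a pair of rigidity circuits. -/
theorem two_split_of_circuit_is_pair_of_circuits
    (E1 E2 : Finset (Sym2 ℕ)) (u v : ℕ) (huv : u ≠ v)
    (hE1 : ∀ e ∈ E1, ¬ e.IsDiag) (hE2 : ∀ e ∈ E2, ¬ e.IsDiag)
    (hV : verts E1 ∩ verts E2 = {u, v})
    (hE : E1 ∩ E2 = {s(u, v)})
    (hn1 : 3 ≤ (verts E1).card) (hn2 : 3 ≤ (verts E2).card)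
    (hverts : verts ((E1 ∪ E2).erase s(u, v)) = verts E1 ∪ verts E2)
    (hC : IsCircuit ((E1 ∪ E2).erase s(u, v))) :
    IsCircuit E1 ∧ IsCircuit E2 := by
  refine ⟨aux_circuit E1 E2 u v huv hE1 hE2 hV hE hn1 hn2 hverts hC, ?_⟩
  have hV' : verts E2 ∩ verts E1 = {u, v} := by rw [Finset.inter_comm]; exact hV
  have hE' : E2 ∩ E1 = {s(u, v)} := by rw [Finset.inter_comm]; exact hE
  have hcomm : (E2 ∪ E1).erase s(u, v) = (E1 ∪ E2).erase s(u, v) := by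
    rw [Finset.union_comm]
  have hverts' : verts ((E2 ∪ E1).erase s(u, v)) = verts E2 ∪ verts E1 := by
    rw [hcomm, hverts, Finset.union_comm]
  have hC' : IsCircuit ((E2 ∪ E1).erase s(u, v)) := by rw [hcomm]; exact hC
  exact aux_circuit E2 E1 u v huv hE2 hE1 hV' hE' hn2 hn1 hverts' hC'
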